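/- Theorem 5.5: Let u, v : Ω → ℝ be Lipschitz functions such that div N(u) ≥ div N(v) in Ω in the weak sense and such that (u − v)⁺ = max(u − v, 0) has compact support contained in Ω. Then N(u)(x) = N(v)(x) for Lebesgue-a.e. x ∈ {x ∈ Ω : u(x) > v(x)} ∖ (S(u) ∪ S(v)). -/

import Mathlib

open MeasureTheory Metric
open scoped RealInnerProductSpace ENNReal


lemma aux_inner_expand {E : Type*} [NormedAddCommGroup E] [InnerProductSpace ℝ E]
    (a b : E) (ha : a ≠ 0) (hb : b ≠ 0) :
    ⟪‖a‖⁻¹ • a - ‖b‖⁻¹ • b, a - b⟫ =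
      ‖a‖ + ‖b‖ - (‖a‖⁻¹ + ‖b‖⁻¹) * ⟪a, b⟫ := by
  have ha' : ‖a‖ ≠ 0 := norm_ne_zero_iff.2 ha
  have hb' : ‖b‖ ≠ 0 := norm_ne_zero_iff.2 hb
  simp only [inner_sub_left, inner_sub_right, real_inner_smul_left,
    real_inner_self_eq_norm_mul_norm, real_inner_comm b a]
  field_simp
  ring

lemma aux_inner_nonneg {E : Type*} [NormedAddCommGroup E] [InnerProductSpace ℝ E]
    (a b : E) (ha : a ≠ 0) (hb : b ≠ 0) :
    0 ≤ ⟪‖a‖⁻¹ • a - ‖b‖⁻¹ • b, a - b⟫ := by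
  rw [aux_inner_expand a b ha hb]
  have ha' : (0:ℝ) < ‖a‖ := norm_pos_iff.2 ha
  have hb' : (0:ℝ) < ‖b‖ := norm_pos_iff.2 hb
  have hcs : ⟪a, b⟫ ≤ ‖a‖ * ‖b‖ := real_inner_le_norm a b
  have h1 : (‖a‖⁻¹ + ‖b‖⁻¹) * ⟪a, b⟫ ≤ (‖a‖⁻¹ + ‖b‖⁻¹) * (‖a‖ * ‖b‖) := by
    apply mul_le_mul_of_nonneg_left hcs
    positivity
  have h2 : (‖a‖⁻¹ + ‖b‖⁻¹) * (‖a‖ * ‖b‖) = ‖a‖ + ‖b‖ := by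
    field_simp; ring
  linarith

lemma aux_inner_eq_zero {E : Type*} [NormedAddCommGroup E] [InnerProductSpace ℝ E]
    (a b : E) (ha : a ≠ 0) (hb : b ≠ 0)
    (h : ⟪‖a‖⁻¹ • a - ‖b‖⁻¹ • b, a - b⟫ = 0) : ‖a‖⁻¹ • a = ‖b‖⁻¹ • b := by
  have ha' : (0:ℝ) < ‖a‖ := norm_pos_iff.2 ha
  have hb' : (0:ℝ) < ‖b‖ := norm_pos_iff.2 hb
  rw [aux_inner_expand a b ha hb] at h
  have h2 : (‖a‖⁻¹ + ‖b‖⁻¹) * (‖a‖ * ‖b‖) = ‖a‖ + ‖b‖ := by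
    field_simp; ring
  have hpos : (0:ℝ) < ‖a‖⁻¹ + ‖b‖⁻¹ := by positivity
  have hinner : ⟪a, b⟫ = ‖a‖ * ‖b‖ := by
    have : (‖a‖⁻¹ + ‖b‖⁻¹) * ⟪a, b⟫ = (‖a‖⁻¹ + ‖b‖⁻¹) * (‖a‖ * ‖b‖) := by linarith
    exact mul_left_cancel₀ (ne_of_gt hpos) this
  have hsmul : ‖b‖ • a = ‖a‖ • b := inner_eq_norm_mul_iff_real.mp hinner
  have : (‖a‖⁻¹ * ‖b‖⁻¹) • (‖b‖ • a) = (‖a‖⁻¹ * ‖b‖⁻¹) • (‖a‖ • b) := by rw [hsmul]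
  rwa [smul_smul, smul_smul, mul_assoc, inv_mul_cancel₀ (ne_of_gt hb'), mul_one,
    mul_comm ‖a‖⁻¹ ‖b‖⁻¹, mul_assoc, inv_mul_cancel₀ (ne_of_gt ha'), mul_one] at this

lemma aux_global_lip {E : Type*} [MetricSpace E] {Ω : Set E} (hΩ : IsOpen Ω)
    {ψ : E → ℝ} {K : NNReal} (hK : LipschitzOnWith K ψ Ω)
    (hc : HasCompactSupport ψ) (hsub : tsupport ψ ⊆ Ω) :
    ∃ K', LipschitzWith K' ψ := by
  obtain ⟨δ, hδ, hthick⟩ := hc.exists_thickening_subset_open hΩ hsub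
  have hzero : ∀ x, x ∉ Ω → ψ x = 0 := fun x hx =>
    image_eq_zero_of_notMem_tsupport (fun h => hx (hsub h))
  obtain ⟨C, hC⟩ := hc.exists_bound_of_continuousOn ((hK.continuousOn).mono hsub)
  set M : ℝ := max C 0 with hMdef
  have hM : ∀ x, |ψ x| ≤ M := by
    intro x
    by_cases hx : x ∈ tsupport ψ
    · exact le_max_of_le_left (by simpa using hC x hx)
    · simp [image_eq_zero_of_notMem_tsupport hx, hMdef]
  have hM0 : 0 ≤ M := le_max_right _ _
  refine ⟨K + Real.toNNReal (M / δ), ?_⟩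
  set K' : NNReal := K + Real.toNNReal (M / δ) with hK'def
  have hKK' : (K : ℝ) ≤ K' := by
    exact NNReal.coe_le_coe.mpr le_self_add
  have hMδK' : M / δ ≤ (K' : ℝ) := by
    have : (Real.toNNReal (M / δ) : ℝ) = M / δ :=
      Real.coe_toNNReal _ (div_nonneg hM0 hδ.le)
    rw [hK'def, NNReal.coe_add, this]
    exact le_add_of_nonneg_left (NNReal.coe_nonneg K)
  have key : ∀ x y, x ∈ Ω → y ∉ Ω → |ψ x - ψ y| ≤ K' * dist x y := by
    intro x y hx hy
    rw [hzero y hy, sub_zero]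
    by_cases hxs : x ∈ tsupport ψ
    · have hdist : δ ≤ dist y x := by
        by_contra hlt
        push_neg at hlt
        exact hy (hthick (mem_thickening_iff.2 ⟨x, hxs, hlt⟩))
      rw [dist_comm y x] at hdist
      calc |ψ x| ≤ M := hM x
        _ = M / δ * δ := (div_mul_cancel₀ M hδ.ne').symm
        _ ≤ M / δ * dist x y := by
            exact mul_le_mul_of_nonneg_left hdist (div_nonneg hM0 hδ.le)
        _ ≤ K' * dist x y := by
            exact mul_le_mul_of_nonneg_right hMδK' dist_nonneg
    · rw [image_eq_zero_of_notMem_tsupport hxs]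
      simpa using mul_nonneg (NNReal.coe_nonneg K') dist_nonneg
  apply LipschitzWith.of_dist_le_mul
  intro x y
  rw [Real.dist_eq]
  by_cases hx : x ∈ Ω <;> by_cases hy : y ∈ Ω
  · calc |ψ x - ψ y| = dist (ψ x) (ψ y) := (Real.dist_eq _ _).symm
      _ ≤ K * dist x y := (lipschitzOnWith_iff_dist_le_mul.mp hK) x hx y hy
      _ ≤ K' * dist x y := mul_le_mul_of_nonneg_right hKK' dist_nonneg
  · exact key x y hx hy
  · rw [abs_sub_comm, dist_comm]; exact key y x hy hx
  · rw [hzero x hx, hzero y hy]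
    simpa using mul_nonneg (NNReal.coe_nonneg K') dist_nonneg

lemma aux_measurable_gradient {m : ℕ} (f : EuclideanSpace ℝ (Fin m) → ℝ) :
    Measurable (fun x => gradient f x) := by
  have h : Measurable (fderiv ℝ f) := measurable_fderiv ℝ f
  exact ((InnerProductSpace.toDual ℝ
    (EuclideanSpace ℝ (Fin m))).symm.continuous.measurable).comp h

lemma aux_norm_gradient {m : ℕ} (f : EuclideanSpace ℝ (Fin m) → ℝ)
    (x : EuclideanSpace ℝ (Fin m)) : ‖gradient f x‖ = ‖fderiv ℝ f x‖ :=
  (InnerProductSpace.toDual ℝ (EuclideanSpace ℝ (Fin m))).symm.norm_map _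

/-- The singular set `S(u) = {x ∈ Ω : ∇u + F⃗ = 0}`. -/
def pSingSet {m : ℕ} (Ω : Set (EuclideanSpace ℝ (Fin m)))
    (F : EuclideanSpace ℝ (Fin m) → EuclideanSpace ℝ (Fin m))
    (u : EuclideanSpace ℝ (Fin m) → ℝ) : Set (EuclideanSpace ℝ (Fin m)) :=
  {x ∈ Ω | gradient u x + F x = 0}

/-- The unit normal `N(u) = (∇u + F⃗)/|∇u + F⃗|` (defined off the singular set). -/
noncomputable def pNormal {m : ℕ}
    (F : EuclideanSpace ℝ (Fin m) → EuclideanSpace ℝ (Fin m))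
    (u : EuclideanSpace ℝ (Fin m) → ℝ) (x : EuclideanSpace ℝ (Fin m)) :
    EuclideanSpace ℝ (Fin m) :=
  ‖gradient u x + F x‖⁻¹ • (gradient u x + F x)

/-- `div N(u) ≥ div N(v)` in `Ω` in the weak sense: for every nonnegative test
function `ψ` (a Lipschitz function with compact support contained in `Ω`),
`−∫_{S(u)} |∇ψ| + ∫_{Ω∖S(u)} N(u)·∇ψ ≤ ∫_{S(v)} |∇ψ| + ∫_{Ω∖S(v)} N(v)·∇ψ`. -/
def WeakDivGE {m : ℕ} (Ω : Set (EuclideanSpace ℝ (Fin m)))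
    (F : EuclideanSpace ℝ (Fin m) → EuclideanSpace ℝ (Fin m))
    (u v : EuclideanSpace ℝ (Fin m) → ℝ) : Prop :=
  ∀ ψ : EuclideanSpace ℝ (Fin m) → ℝ, (∃ K, LipschitzWith K ψ) →
    HasCompactSupport ψ → tsupport ψ ⊆ Ω → (∀ x, 0 ≤ ψ x) →
    -(∫ x in pSingSet Ω F u, ‖gradient ψ x‖) +
        (∫ x in Ω \ pSingSet Ω F u, ⟪pNormal F u x, gradient ψ x⟫) ≤
      (∫ x in pSingSet Ω F v, ‖gradient ψ x‖) +
        (∫ x in Ω \ pSingSet Ω F v, ⟪pNormal F v x, gradient ψ x⟫)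

set_option maxHeartbeats 1000000 in
/-- **Theorem 5.5**: if `div N(u) ≥ div N(v)` weakly in `Ω` and `(u − v)⁺` is compactly
supported in `Ω`, then `N(u) = N(v)` a.e. on `{u > v} ∖ (S(u) ∪ S(v))`. -/
theorem normals_agree_on_pos_set {m : ℕ} (hm : 1 ≤ m)
    (Ω : Set (EuclideanSpace ℝ (Fin m)))
    (hΩopen : IsOpen Ω) (hΩbdd : Bornology.IsBounded Ω)
    (hΩne : Ω.Nonempty) (hΩconn : IsConnected Ω)
    (F : EuclideanSpace ℝ (Fin m) → EuclideanSpace ℝ (Fin m))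
    (hF : IntegrableOn F Ω volume)
    (u v : EuclideanSpace ℝ (Fin m) → ℝ)
    (hu : ∃ K, LipschitzOnWith K u Ω) (hv : ∃ K, LipschitzOnWith K v Ω)
    (hdiv : WeakDivGE Ω F u v)
    (hsupp : HasCompactSupport (fun x => max (u x - v x) 0))
    (hsuppΩ : tsupport (fun x => max (u x - v x) 0) ⊆ Ω) :
    ∀ᵐ x ∂(volume.restrict
        ({x ∈ Ω | v x < u x} \ (pSingSet Ω F u ∪ pSingSet Ω F v))),
      pNormal F u x = pNormal F v x := by
  classical
  obtain ⟨Ku, hKu⟩ := hu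
  obtain ⟨Kv, hKv⟩ := hv
  set ψ : EuclideanSpace ℝ (Fin m) → ℝ := fun x => max (u x - v x) 0 with hψdef
  have hΩm : MeasurableSet Ω := hΩopen.measurableSet
  have hψ0 : ∀ x, 0 ≤ ψ x := fun x => le_max_right _ _
  -- ψ Lipschitz on Ω
  have hψΩlip : LipschitzOnWith (1 * (Ku + Kv)) ψ Ω := by
    have h1 : LipschitzWith 1 (fun t : ℝ => max t 0) := by
      apply LipschitzWith.of_dist_le_mul
      intro a b
      rw [Real.dist_eq, Real.dist_eq]
      simpa using abs_max_sub_max_le_abs a b 0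
    exact h1.comp_lipschitzOnWith (hKu.sub hKv)
  obtain ⟨Kψ, hψlip⟩ := aux_global_lip hΩopen hψΩlip hsupp hsuppΩ
  have hψcont : Continuous ψ := hψlip.continuous
  -- the open set P = {ψ > 0}
  set P : Set (EuclideanSpace ℝ (Fin m)) := {x | 0 < ψ x} with hPdef
  have hPopen : IsOpen P := isOpen_lt continuous_const hψcont
  have hPsub : P ⊆ Ω := by
    intro x hx
    exact hsuppΩ (subset_tsupport ψ (ne_of_gt hx))
  have hPeq : {x ∈ Ω | v x < u x} = P := by
    ext x
    simp only [Set.mem_setOf_eq, hPdef, hψdef]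
    constructor
    · rintro ⟨hxΩ, hlt⟩
      simp only [lt_max_iff]
      left; linarith
    · intro hx
      rw [lt_max_iff] at hx
      have hlt : v x < u x := by
        rcases hx with h | h
        · linarith
        · exact absurd h (lt_irrefl 0)
      refine ⟨?_, hlt⟩
      apply hPsub
      simpa [hPdef, hψdef, lt_max_iff] using hx
  -- measurable representative of F
  have hFmeas := hF.aestronglyMeasurable
  set F' := hFmeas.mk F with hF'def
  have hF'm : Measurable F' := hFmeas.stronglyMeasurable_mk.measurable
  have hFF' : F =ᵐ[volume.restrict Ω] F' := hFmeas.ae_eq_mk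
  have hBad : volume ({x | F x ≠ F' x} ∩ Ω) = 0 := by
    have h := hFF'
    rw [Filter.EventuallyEq, ae_iff] at h
    rwa [Measure.restrict_apply' hΩm] at h
  have hgum : Measurable (fun x => gradient u x) := aux_measurable_gradient u
  have hgvm : Measurable (fun x => gradient v x) := aux_measurable_gradient v
  have hgm : Measurable (fun x => gradient ψ x) := aux_measurable_gradient ψ
  set Du : Set (EuclideanSpace ℝ (Fin m)) := {x | gradient u x + F' x = 0} with hDudef
  set Dv : Set (EuclideanSpace ℝ (Fin m)) := {x | gradient v x + F' x = 0} with hDvdef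
  have hDum : MeasurableSet Du := by
    exact (hgum.add hF'm) (measurableSet_singleton (0 : EuclideanSpace ℝ (Fin m)))
  have hDvm : MeasurableSet Dv := by
    exact (hgvm.add hF'm) (measurableSet_singleton (0 : EuclideanSpace ℝ (Fin m)))
  -- singular sets agree a.e. with measurable versions
  have hSuae : pSingSet Ω F u =ᵐ[volume] ((Ω ∩ Du : Set (EuclideanSpace ℝ (Fin m)))) := by
    rw [ae_eq_set]
    constructor
    · apply measure_mono_null _ hBad
      rintro x ⟨⟨hxΩ, hx0⟩, hxn⟩
      refine ⟨fun heq => hxn ⟨hxΩ, ?_⟩, hxΩ⟩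
      show gradient u x + F' x = 0
      rw [← heq]; exact hx0
    · apply measure_mono_null _ hBad
      rintro x ⟨⟨hxΩ, hx0⟩, hxn⟩
      refine ⟨fun heq => hxn ⟨hxΩ, ?_⟩, hxΩ⟩
      show gradient u x + F x = 0
      rw [heq]; exact hx0
  have hSvae : pSingSet Ω F v =ᵐ[volume] ((Ω ∩ Dv : Set (EuclideanSpace ℝ (Fin m)))) := by
    rw [ae_eq_set]
    constructor
    · apply measure_mono_null _ hBad
      rintro x ⟨⟨hxΩ, hx0⟩, hxn⟩
      refine ⟨fun heq => hxn ⟨hxΩ, ?_⟩, hxΩ⟩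
      show gradient v x + F' x = 0
      rw [← heq]; exact hx0
    · apply measure_mono_null _ hBad
      rintro x ⟨⟨hxΩ, hx0⟩, hxn⟩
      refine ⟨fun heq => hxn ⟨hxΩ, ?_⟩, hxΩ⟩
      show gradient v x + F x = 0
      rw [heq]; exact hx0
  have hΩSuae : ((Ω \ pSingSet Ω F u : Set (EuclideanSpace ℝ (Fin m)))) =ᵐ[volume] ((Ω \ Du : Set (EuclideanSpace ℝ (Fin m)))) := by
    rw [ae_eq_set]
    constructor
    · apply measure_mono_null _ hBad
      rintro x ⟨⟨hxΩ, hxn⟩, hxn2⟩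
      have hxDu : x ∈ Du := by
        by_contra h
        exact hxn2 ⟨hxΩ, h⟩
      refine ⟨fun heq => hxn ⟨hxΩ, ?_⟩, hxΩ⟩
      show gradient u x + F x = 0
      rw [heq]; exact hxDu
    · apply measure_mono_null _ hBad
      rintro x ⟨⟨hxΩ, hxn⟩, hxn2⟩
      have hxSu : x ∈ pSingSet Ω F u := by
        by_contra h
        exact hxn2 ⟨hxΩ, h⟩
      refine ⟨fun heq => hxn ?_, hxΩ⟩
      show gradient u x + F' x = 0
      rw [← heq]; exact hxSu.2
  have hΩSvae : ((Ω \ pSingSet Ω F v : Set (EuclideanSpace ℝ (Fin m)))) =ᵐ[volume] ((Ω \ Dv : Set (EuclideanSpace ℝ (Fin m)))) := by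
    rw [ae_eq_set]
    constructor
    · apply measure_mono_null _ hBad
      rintro x ⟨⟨hxΩ, hxn⟩, hxn2⟩
      have hxDv : x ∈ Dv := by
        by_contra h
        exact hxn2 ⟨hxΩ, h⟩
      refine ⟨fun heq => hxn ⟨hxΩ, ?_⟩, hxΩ⟩
      show gradient v x + F x = 0
      rw [heq]; exact hxDv
    · apply measure_mono_null _ hBad
      rintro x ⟨⟨hxΩ, hxn⟩, hxn2⟩
      have hxSv : x ∈ pSingSet Ω F v := by
        by_contra h
        exact hxn2 ⟨hxΩ, h⟩
      refine ⟨fun heq => hxn ?_, hxΩ⟩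
      show gradient v x + F' x = 0
      rw [← heq]; exact hxSv.2
  -- Rademacher
  have hdiffu : ∀ᵐ x ∂volume.restrict Ω, DifferentiableAt ℝ u x := by
    filter_upwards [hKu.ae_differentiableWithinAt hΩm, ae_restrict_mem hΩm] with x h1 h2
    exact h1.differentiableAt (hΩopen.mem_nhds h2)
  have hdiffv : ∀ᵐ x ∂volume.restrict Ω, DifferentiableAt ℝ v x := by
    filter_upwards [hKv.ae_differentiableWithinAt hΩm, ae_restrict_mem hΩm] with x h1 h2
    exact h1.differentiableAt (hΩopen.mem_nhds h2)
  -- gradient facts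
  have hgbound : ∀ x, ‖gradient ψ x‖ ≤ (Kψ : ℝ) := by
    intro x
    rw [aux_norm_gradient]
    exact norm_fderiv_le_of_lipschitz ℝ hψlip
  have hgP : ∀ x ∈ P, DifferentiableAt ℝ u x → DifferentiableAt ℝ v x →
      gradient ψ x = gradient u x - gradient v x := by
    intro x hxP hdu hdv
    have hev : ψ =ᶠ[nhds x] (fun y => u y - v y) := by
      filter_upwards [hPopen.mem_nhds hxP] with y hy
      have hy' : 0 < u y - v y := by
        by_contra hc
        push_neg at hc
        have h0 : ψ y = 0 := max_eq_right hc
        rw [hPdef] at hy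
        simp only [Set.mem_setOf_eq] at hy
        rw [h0] at hy
        exact lt_irrefl 0 hy
      exact max_eq_left hy'.le
    have h1 : fderiv ℝ ψ x = fderiv ℝ (fun y => u y - v y) x := hev.fderiv_eq
    have h2 : fderiv ℝ (fun y => u y - v y) x = fderiv ℝ u x - fderiv ℝ v x :=
      fderiv_sub hdu hdv
    unfold gradient
    rw [h1, h2, map_sub]
  have hgnotP : ∀ x, x ∉ P → gradient ψ x = 0 := by
    intro x hxP
    have hψx : ψ x = 0 := le_antisymm (not_lt.mp hxP) (hψ0 x)
    have hmin : IsLocalMin ψ x := Filter.Eventually.of_forall (fun y => by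
      rw [hψx]; exact hψ0 y)
    have hf0 := hmin.fderiv_eq_zero
    unfold gradient
    rw [hf0, map_zero]
  -- measurable normals
  set Nu' := fun x => ‖gradient u x + F' x‖⁻¹ • (gradient u x + F' x) with hNu'def
  set Nv' := fun x => ‖gradient v x + F' x‖⁻¹ • (gradient v x + F' x) with hNv'def
  have hNu'm : Measurable Nu' := ((hgum.add hF'm).norm.inv).smul (hgum.add hF'm)
  have hNv'm : Measurable Nv' := ((hgvm.add hF'm).norm.inv).smul (hgvm.add hF'm)
  have hNu'bd : ∀ x, ‖Nu' x‖ ≤ 1 := by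
    intro x
    rcases eq_or_ne (gradient u x + F' x) 0 with h | h
    · simp [hNu'def, h]
    · rw [hNu'def]
      simp only []
      rw [norm_smul, norm_inv, norm_norm, inv_mul_cancel₀ (norm_ne_zero_iff.2 h)]
  have hNv'bd : ∀ x, ‖Nv' x‖ ≤ 1 := by
    intro x
    rcases eq_or_ne (gradient v x + F' x) 0 with h | h
    · simp [hNv'def, h]
    · rw [hNv'def]
      simp only []
      rw [norm_smul, norm_inv, norm_norm, inv_mul_cancel₀ (norm_ne_zero_iff.2 h)]
  have hNuae : (fun x => pNormal F u x) =ᵐ[volume.restrict Ω] Nu' := by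
    filter_upwards [hFF'] with x hx
    simp only [pNormal, hNu'def]
    rw [hx]
  have hNvae : (fun x => pNormal F v x) =ᵐ[volume.restrict Ω] Nv' := by
    filter_upwards [hFF'] with x hx
    simp only [pNormal, hNv'def]
    rw [hx]
  -- integrability
  haveI hfin : IsFiniteMeasure (volume.restrict Ω) :=
    ⟨by rw [Measure.restrict_apply_univ]; exact hΩbdd.measure_lt_top⟩
  have hbint : ∀ (f : EuclideanSpace ℝ (Fin m) → ℝ) (C : ℝ), Measurable f →
      (∀ x, |f x| ≤ C) → IntegrableOn f Ω volume := by
    intro f C hf hb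
    exact ⟨hf.aestronglyMeasurable, HasFiniteIntegral.of_bounded
      (C := C) (Filter.Eventually.of_forall fun x => by simpa using hb x)⟩
  have hrint : IntegrableOn (fun x => ‖gradient ψ x‖) Ω volume := by
    apply hbint _ (Kψ : ℝ) hgm.norm
    intro x
    rw [abs_of_nonneg (norm_nonneg _)]
    exact hgbound x
  have hq1int : IntegrableOn (fun x => ⟪Nu' x, gradient ψ x⟫) Ω volume := by
    apply hbint _ (Kψ : ℝ) (hNu'm.inner hgm)
    intro x
    refine (abs_real_inner_le_norm _ _).trans ?_
    calc ‖Nu' x‖ * ‖gradient ψ x‖ ≤ 1 * (Kψ : ℝ) :=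
          mul_le_mul (hNu'bd x) (hgbound x) (norm_nonneg _) one_pos.le
      _ = (Kψ : ℝ) := one_mul _
  have hq2int : IntegrableOn (fun x => ⟪Nv' x, gradient ψ x⟫) Ω volume := by
    apply hbint _ (Kψ : ℝ) (hNv'm.inner hgm)
    intro x
    refine (abs_real_inner_le_norm _ _).trans ?_
    calc ‖Nv' x‖ * ‖gradient ψ x‖ ≤ 1 * (Kψ : ℝ) :=
          mul_le_mul (hNv'bd x) (hgbound x) (norm_nonneg _) one_pos.le
      _ = (Kψ : ℝ) := one_mul _
  -- apply the weak inequality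
  have hineq := hdiv ψ ⟨Kψ, hψlip⟩ hsupp hsuppΩ hψ0
  have e1 : (∫ x in pSingSet Ω F u, ‖gradient ψ x‖) =
      ∫ x in Ω, Du.indicator (fun y => ‖gradient ψ y‖) x := by
    rw [setIntegral_congr_set hSuae, setIntegral_indicator hDum]
  have e3 : (∫ x in pSingSet Ω F v, ‖gradient ψ x‖) =
      ∫ x in Ω, Dv.indicator (fun y => ‖gradient ψ y‖) x := by
    rw [setIntegral_congr_set hSvae, setIntegral_indicator hDvm]
  have e2 : (∫ x in Ω \ pSingSet Ω F u, ⟪pNormal F u x, gradient ψ x⟫) =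
      ∫ x in Ω, ⟪Nu' x, gradient ψ x⟫ := by
    rw [setIntegral_congr_set hΩSuae]
    have h1 : (∫ x in Ω \ Du, ⟪pNormal F u x, gradient ψ x⟫) =
        ∫ x in Ω \ Du, ⟪Nu' x, gradient ψ x⟫ := by
      apply integral_congr_ae
      filter_upwards [ae_restrict_of_ae_restrict_of_subset Set.diff_subset hNuae] with x hx
      rw [hx]
    rw [h1]
    have h2 := integral_inter_add_diff (μ := volume) (s := Ω)
      (f := fun x => ⟪Nu' x, gradient ψ x⟫) hDum hq1int
    have h3 : (∫ x in Ω ∩ Du, ⟪Nu' x, gradient ψ x⟫) = 0 := by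
      apply setIntegral_eq_zero_of_forall_eq_zero
      intro x hx
      have hx0 : gradient u x + F' x = 0 := hx.2
      simp [hNu'def, hx0]
    linarith
  have e4 : (∫ x in Ω \ pSingSet Ω F v, ⟪pNormal F v x, gradient ψ x⟫) =
      ∫ x in Ω, ⟪Nv' x, gradient ψ x⟫ := by
    rw [setIntegral_congr_set hΩSvae]
    have h1 : (∫ x in Ω \ Dv, ⟪pNormal F v x, gradient ψ x⟫) =
        ∫ x in Ω \ Dv, ⟪Nv' x, gradient ψ x⟫ := by
      apply integral_congr_ae
      filter_upwards [ae_restrict_of_ae_restrict_of_subset Set.diff_subset hNvae] with x hx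
      rw [hx]
    rw [h1]
    have h2 := integral_inter_add_diff (μ := volume) (s := Ω)
      (f := fun x => ⟪Nv' x, gradient ψ x⟫) hDvm hq2int
    have h3 : (∫ x in Ω ∩ Dv, ⟪Nv' x, gradient ψ x⟫) = 0 := by
      apply setIntegral_eq_zero_of_forall_eq_zero
      intro x hx
      have hx0 : gradient v x + F' x = 0 := hx.2
      simp [hNv'def, hx0]
    linarith
  rw [e1, e2, e3, e4] at hineq
  -- the combined function W
  set W := fun x => ⟪Nu' x, gradient ψ x⟫ - ⟪Nv' x, gradient ψ x⟫
      - Du.indicator (fun y => ‖gradient ψ y‖) x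
      - Dv.indicator (fun y => ‖gradient ψ y‖) x with hWdef
  have hWint : IntegrableOn W Ω volume :=
    ((hq1int.sub hq2int).sub (hrint.indicator hDum)).sub (hrint.indicator hDvm)
  have hWle : (∫ x in Ω, W x) ≤ 0 := by
    have hiW : (∫ x in Ω, W x) = (∫ x in Ω, ⟪Nu' x, gradient ψ x⟫)
        - (∫ x in Ω, ⟪Nv' x, gradient ψ x⟫)
        - (∫ x in Ω, Du.indicator (fun y => ‖gradient ψ y‖) x)
        - (∫ x in Ω, Dv.indicator (fun y => ‖gradient ψ y‖) x) := by
      have hi2 : IntegrableOn (fun x => ⟪Nu' x, gradient ψ x⟫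
          - ⟪Nv' x, gradient ψ x⟫) Ω volume := hq1int.sub hq2int
      have hi3 : IntegrableOn (fun x => ⟪Nu' x, gradient ψ x⟫
          - ⟪Nv' x, gradient ψ x⟫
          - Du.indicator (fun y => ‖gradient ψ y‖) x) Ω volume :=
        hi2.sub (hrint.indicator hDum)
      simp only [hWdef]
      rw [integral_sub hi3 (hrint.indicator hDvm)]
      rw [integral_sub hi2 (hrint.indicator hDum)]
      rw [integral_sub hq1int hq2int]
    rw [hiW]
    linarith
  have hW0 : ∀ᵐ x ∂volume.restrict Ω, 0 ≤ W x := by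
    filter_upwards [hFF', hdiffu, hdiffv] with x hFx hdu hdv
    by_cases hxP : x ∈ P
    · have hgx : gradient ψ x = (gradient u x + F' x) - (gradient v x + F' x) := by
        rw [hgP x hxP hdu hdv, add_sub_add_right_eq_sub]
      rcases eq_or_ne (gradient u x + F' x) 0 with hA | hA
      · rcases eq_or_ne (gradient v x + F' x) 0 with hB | hB
        · have hg0 : gradient ψ x = 0 := by rw [hgx, hA, hB, sub_zero]
          have h3 : Du.indicator (fun y => ‖gradient ψ y‖) x = 0 := by
            by_cases h : x ∈ Du
            · rw [Set.indicator_of_mem h, hg0, norm_zero]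
            · exact Set.indicator_of_notMem h _
          have h4 : Dv.indicator (fun y => ‖gradient ψ y‖) x = 0 := by
            by_cases h : x ∈ Dv
            · rw [Set.indicator_of_mem h, hg0, norm_zero]
            · exact Set.indicator_of_notMem h _
          have hW : W x = 0 := by
            simp only [hWdef]
            rw [hg0, inner_zero_right, inner_zero_right, h3, h4]
            ring
          exact le_of_eq hW.symm
        · have hxDu : x ∈ Du := hA
          have hxDv : x ∉ Dv := hB
          have hb' : ‖gradient v x + F' x‖ ≠ 0 := norm_ne_zero_iff.2 hB
          have hg0 : gradient ψ x = -(gradient v x + F' x) := by rw [hgx, hA, zero_sub]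
          have h1 : ⟪Nu' x, gradient ψ x⟫ = 0 := by simp [hNu'def, hA]
          have h2 : ⟪Nv' x, gradient ψ x⟫ = -‖gradient v x + F' x‖ := by
            simp only [hNv'def]
            rw [hg0, inner_neg_right, real_inner_smul_left,
              real_inner_self_eq_norm_mul_norm]
            field_simp
          have h3 : Du.indicator (fun y => ‖gradient ψ y‖) x = ‖gradient v x + F' x‖ := by
            rw [Set.indicator_of_mem hxDu, hg0, norm_neg]
          have h4 : Dv.indicator (fun y => ‖gradient ψ y‖) x = 0 :=
            Set.indicator_of_notMem hxDv _
          have hW : W x = 0 := by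
            simp only [hWdef]
            rw [h1, h2, h3, h4]
            ring
          exact le_of_eq hW.symm
      · rcases eq_or_ne (gradient v x + F' x) 0 with hB | hB
        · have hxDu : x ∉ Du := hA
          have hxDv : x ∈ Dv := hB
          have ha' : ‖gradient u x + F' x‖ ≠ 0 := norm_ne_zero_iff.2 hA
          have hg0 : gradient ψ x = gradient u x + F' x := by rw [hgx, hB, sub_zero]
          have h1 : ⟪Nu' x, gradient ψ x⟫ = ‖gradient u x + F' x‖ := by
            simp only [hNu'def]
            rw [hg0, real_inner_smul_left, real_inner_self_eq_norm_mul_norm]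
            field_simp
          have h2 : ⟪Nv' x, gradient ψ x⟫ = 0 := by simp [hNv'def, hB]
          have h3 : Du.indicator (fun y => ‖gradient ψ y‖) x = 0 :=
            Set.indicator_of_notMem hxDu _
          have h4 : Dv.indicator (fun y => ‖gradient ψ y‖) x = ‖gradient u x + F' x‖ := by
            rw [Set.indicator_of_mem hxDv, hg0]
          have hW : W x = 0 := by
            simp only [hWdef]
            rw [h1, h2, h3, h4]
            ring
          exact le_of_eq hW.symm
        · have hxDu : x ∉ Du := hA
          have hxDv : x ∉ Dv := hB
          have h3 : Du.indicator (fun y => ‖gradient ψ y‖) x = 0 :=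
            Set.indicator_of_notMem hxDu _
          have h4 : Dv.indicator (fun y => ‖gradient ψ y‖) x = 0 :=
            Set.indicator_of_notMem hxDv _
          have hWx : W x = ⟪Nu' x - Nv' x,
              (gradient u x + F' x) - (gradient v x + F' x)⟫ := by
            simp only [hWdef]
            rw [h3, h4, sub_zero, sub_zero, hgx, inner_sub_left]
          rw [hWx]
          exact aux_inner_nonneg _ _ hA hB
    · have hg0 : gradient ψ x = 0 := hgnotP x hxP
      have h3 : Du.indicator (fun y => ‖gradient ψ y‖) x = 0 := by
        by_cases h : x ∈ Du
        · rw [Set.indicator_of_mem h, hg0, norm_zero]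
        · exact Set.indicator_of_notMem h _
      have h4 : Dv.indicator (fun y => ‖gradient ψ y‖) x = 0 := by
        by_cases h : x ∈ Dv
        · rw [Set.indicator_of_mem h, hg0, norm_zero]
        · exact Set.indicator_of_notMem h _
      have hW : W x = 0 := by
        simp only [hWdef]
        rw [hg0, inner_zero_right, inner_zero_right, h3, h4]
        ring
      exact le_of_eq hW.symm
  have hWeq0 : (∫ x in Ω, W x) = 0 :=
    le_antisymm hWle (integral_nonneg_of_ae hW0)
  have hWeq : W =ᵐ[volume.restrict Ω] 0 :=
    (integral_eq_zero_iff_of_nonneg_ae hW0 hWint).mp hWeq0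
  -- pointwise conclusion a.e. on Ω
  have hfinal : ∀ᵐ x ∂volume.restrict Ω,
      (x ∈ ({x ∈ Ω | v x < u x} \ (pSingSet Ω F u ∪ pSingSet Ω F v)) →
        pNormal F u x = pNormal F v x) := by
    filter_upwards [hFF', hdiffu, hdiffv, hWeq] with x hFx hdu hdv hWx
    rintro ⟨hx1, hx2⟩
    have hxΩ : x ∈ Ω := hx1.1
    have hxP : x ∈ P := by
      rw [← hPeq]; exact hx1
    have hA : gradient u x + F' x ≠ 0 := by
      intro h
      exact hx2 (Set.mem_union_left _ ⟨hxΩ, by rw [hFx]; exact h⟩)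
    have hB : gradient v x + F' x ≠ 0 := by
      intro h
      exact hx2 (Set.mem_union_right _ ⟨hxΩ, by rw [hFx]; exact h⟩)
    have hxDu : x ∉ Du := hA
    have hxDv : x ∉ Dv := hB
    have hgx : gradient ψ x = (gradient u x + F' x) - (gradient v x + F' x) := by
      rw [hgP x hxP hdu hdv, add_sub_add_right_eq_sub]
    have hWx' : ⟪Nu' x - Nv' x,
        (gradient u x + F' x) - (gradient v x + F' x)⟫ = 0 := by
      have h3 : Du.indicator (fun y => ‖gradient ψ y‖) x = 0 :=
        Set.indicator_of_notMem hxDu _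
      have h4 : Dv.indicator (fun y => ‖gradient ψ y‖) x = 0 :=
        Set.indicator_of_notMem hxDv _
      have hthis := hWx
      simp only [hWdef, Pi.zero_apply] at hthis
      rw [h3, h4, sub_zero, sub_zero, hgx] at hthis
      rw [inner_sub_left]
      exact hthis
    have hres := aux_inner_eq_zero _ _ hA hB hWx'
    show pNormal F u x = pNormal F v x
    simp only [pNormal]
    rw [hFx]
    exact hres
  -- transfer to the restricted measure
  have hSunull : NullMeasurableSet (pSingSet Ω F u) volume :=
    ((hΩm.inter hDum).nullMeasurableSet).congr hSuae.symm
  have hSvnull : NullMeasurableSet (pSingSet Ω F v) volume :=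
    ((hΩm.inter hDvm).nullMeasurableSet).congr hSvae.symm
  have hPm : MeasurableSet {x ∈ Ω | v x < u x} := by
    rw [hPeq]; exact hPopen.measurableSet
  have hTnull : NullMeasurableSet
      ({x ∈ Ω | v x < u x} \ (pSingSet Ω F u ∪ pSingSet Ω F v)) volume :=
    hPm.nullMeasurableSet.diff (hSunull.union hSvnull)
  have hTsub : ({x ∈ Ω | v x < u x} \ (pSingSet Ω F u ∪ pSingSet Ω F v)) ⊆ Ω :=
    fun x hx => hx.1.1
  have hmono : volume.restrict
      ({x ∈ Ω | v x < u x} \ (pSingSet Ω F u ∪ pSingSet Ω F v))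
      ≤ volume.restrict Ω := Measure.restrict_mono hTsub le_rfl
  filter_upwards [hfinal.filter_mono (ae_mono hmono), ae_restrict_mem₀ hTnull] with x h1 h2
  exact h1 h2
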